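/- arXiv:1403.0177 — 4 statements merged into one kernel-verified Lean document; each statement's English description precedes it below -/
import Mathlib

section
/- For every nonnegative measurable function f on ℝⁿ, the anisotropic polar-coordinates formula holds: ∫_{ℝⁿ} f(x) dx = ∫_{S^{n−1}} ∫_0^∞ f(δ_t ω) t^{Δ−1} (Σᵢ₌₁ⁿ αᵢ ωᵢ²) dt dσ(ω), where σ is the surface measure on the Euclidean unit sphere S^{n−1}. -/
open Finset MeasureTheory Matrix

/-!
Put `Φ x = δ_{‖x‖} (‖x‖⁻¹ • x)`, i.e. `Φ(x)ᵢ = ‖x‖^(αᵢ-1) xᵢ`, so that `Φ (t • ω) = δ_t ω`.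
Along each ray `t ↦ ‖δ_t y‖` increases strictly from `0` to `∞`, so every `y ≠ 0` is `δ_t ω`
for exactly one `t > 0` and unit vector `ω`: `Φ` is a bijection of `ℝⁿ ∖ {0}`. Its Jacobian
matrix is `diag(‖x‖^(αᵢ-1)) (1 + u xᵀ)` with `uᵢ = (αᵢ-1) xᵢ / ‖x‖²`, so the matrix determinant
lemma gives `det DΦ(t • ω) = t^(Δ-n) ∑ αᵢ ωᵢ²`. Changing variables by `Φ` and then passing to
Euclidean polar coordinates, the radial density `t^(n-1)` and this Jacobian combine into
`t^(Δ-1) ∑ αᵢ ωᵢ²`.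
-/

lemma hasStrictFDerivAt_norm_rpow_of_ne_zero {E : Type*} [NormedAddCommGroup E]
    [InnerProductSpace ℝ E] {x : E} (hx : x ≠ 0) (p : ℝ) :
    HasStrictFDerivAt (fun y : E => ‖y‖ ^ p) ((p * ‖x‖ ^ (p - 2)) • innerSL ℝ x) x := by
  convert! (hasStrictFDerivAt_norm_sq x).rpow_const (p := p / 2) (by simp [hx]) using 0
  simp_rw [← Real.rpow_natCast_mul (norm_nonneg _), ← Nat.cast_smul_eq_nsmul ℝ, smul_smul]
  ring_nf

section Dilation

variable {n : ℕ} (α : Fin n → ℝ)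

noncomputable def anisoDilation (t : ℝ) (x : EuclideanSpace ℝ (Fin n)) :
    EuclideanSpace ℝ (Fin n) :=
  WithLp.toLp 2 fun i => t ^ α i * x i

@[simp]
lemma anisoDilation_apply (t : ℝ) (x : EuclideanSpace ℝ (Fin n)) (i : Fin n) :
    anisoDilation α t x i = t ^ α i * x i := rfl

@[simp]
lemma anisoDilation_one (x : EuclideanSpace ℝ (Fin n)) : anisoDilation α 1 x = x := by
  ext i; simp

lemma anisoDilation_anisoDilation {s t : ℝ} (hs : 0 ≤ s) (ht : 0 ≤ t)
    (x : EuclideanSpace ℝ (Fin n)) :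
    anisoDilation α s (anisoDilation α t x) = anisoDilation α (s * t) x := by
  ext i; simp [Real.mul_rpow hs ht, mul_assoc]

lemma anisoDilation_zero (hα : ∀ i, α i ≠ 0) (x : EuclideanSpace ℝ (Fin n)) :
    anisoDilation α 0 x = 0 := by
  ext i; simp [Real.zero_rpow (hα i)]

lemma continuous_anisoDilation (hα : ∀ i, 0 ≤ α i) (x : EuclideanSpace ℝ (Fin n)) :
    Continuous fun t => anisoDilation α t x :=
  (PiLp.continuous_toLp 2 _).comp <| continuous_pi fun i =>
    (Real.continuous_rpow_const (hα i)).mul continuous_const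

lemma norm_anisoDilation_apply {t : ℝ} (ht : 0 ≤ t) (x : EuclideanSpace ℝ (Fin n)) (i : Fin n) :
    ‖anisoDilation α t x i‖ = t ^ α i * ‖x i‖ := by
  simp [abs_of_nonneg (Real.rpow_nonneg ht _)]

variable {α}

lemma strictMonoOn_norm_anisoDilation (hα : ∀ i, 0 < α i) {x : EuclideanSpace ℝ (Fin n)}
    (hx : x ≠ 0) : StrictMonoOn (fun t => ‖anisoDilation α t x‖) (Set.Ici 0) := by
  intro s hs t ht hst
  rw [Set.mem_Ici] at hs ht
  obtain ⟨j, hj⟩ : ∃ j, x j ≠ 0 := by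
    by_contra! h; exact hx (PiLp.ext h)
  refine lt_of_pow_lt_pow_left₀ 2 (norm_nonneg _) ?_
  simp only [EuclideanSpace.norm_sq_eq, norm_anisoDilation_apply α hs,
    norm_anisoDilation_apply α ht]
  refine Finset.sum_lt_sum (fun i _ => ?_) ⟨j, mem_univ j, ?_⟩
  · gcongr; exact (hα i).le
  · gcongr; exact hα j

lemma exists_anisoDilation_eq (hα : ∀ i, 0 < α i) {y : EuclideanSpace ℝ (Fin n)} (hy : y ≠ 0) :
    ∃ t > 0, ∃ ω : EuclideanSpace ℝ (Fin n), ‖ω‖ = 1 ∧ anisoDilation α t ω = y := by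
  obtain ⟨j, hj⟩ : ∃ j, y j ≠ 0 := by
    by_contra! h; exact hy (PiLp.ext h)
  have hyj : 0 < ‖y j‖ := norm_pos_iff.2 hj
  set b := ‖y j‖ ^ (-(α j)⁻¹) with hb
  have hb0 : 0 ≤ b := Real.rpow_nonneg hyj.le _
  have hb1 : 1 ≤ ‖anisoDilation α b y‖ := calc
    1 = b ^ α j * ‖y j‖ := by
      rw [hb, ← Real.rpow_mul hyj.le, neg_mul, inv_mul_cancel₀ (hα j).ne', Real.rpow_neg_one,
        inv_mul_cancel₀ hyj.ne']
    _ = ‖anisoDilation α b y j‖ := (norm_anisoDilation_apply α hb0 y j).symm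
    _ ≤ ‖anisoDilation α b y‖ := PiLp.norm_apply_le _ j
  have hzero : ‖anisoDilation α 0 y‖ = 0 := by
    rw [anisoDilation_zero α fun i => (hα i).ne', norm_zero]
  have hcont : ContinuousOn (fun t => ‖anisoDilation α t y‖) (Set.Icc 0 b) :=
    (continuous_norm.comp (continuous_anisoDilation α (fun i => (hα i).le) y)).continuousOn
  obtain ⟨s, ⟨hs0, -⟩, hs⟩ :=
    intermediate_value_Icc hb0 hcont ⟨hzero.trans_le zero_le_one, hb1⟩
  have hs_pos : 0 < s := hs0.lt_of_ne (by rintro rfl; exact zero_ne_one (hzero.symm.trans hs))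
  refine ⟨s⁻¹, inv_pos.2 hs_pos, anisoDilation α s y, hs, ?_⟩
  rw [anisoDilation_anisoDilation α (inv_nonneg.2 hs0) hs0, inv_mul_cancel₀ hs_pos.ne',
    anisoDilation_one]

lemma eq_of_anisoDilation_eq (hα : ∀ i, 0 < α i) {s t : ℝ} (hs : 0 < s) (ht : 0 < t)
    {ω η : EuclideanSpace ℝ (Fin n)} (hω : ‖ω‖ = 1) (hη : ‖η‖ = 1)
    (h : anisoDilation α s ω = anisoDilation α t η) : s = t ∧ ω = η := by
  have hω' : ω = anisoDilation α (s⁻¹ * t) η := by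
    rw [← anisoDilation_anisoDilation α (inv_nonneg.2 hs.le) ht.le, ← h,
      anisoDilation_anisoDilation α (inv_nonneg.2 hs.le) hs.le, inv_mul_cancel₀ hs.ne',
      anisoDilation_one]
  have hη0 : η ≠ 0 := norm_ne_zero_iff.1 (hη ▸ one_ne_zero)
  have hst : s⁻¹ * t = 1 :=
    (strictMonoOn_norm_anisoDilation hα hη0).injOn (Set.mem_Ici.2 (by positivity))
      (Set.mem_Ici.2 zero_le_one) (by simp only [← hω', hω, anisoDilation_one, hη])
  rw [hst, anisoDilation_one] at hω'
  exact ⟨inv_mul_eq_one₀ hs.ne' |>.1 hst, hω'⟩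

end Dilation

section PolarMap

variable {n : ℕ} (α : Fin n → ℝ)

noncomputable def anisoPolarMap (x : EuclideanSpace ℝ (Fin n)) : EuclideanSpace ℝ (Fin n) :=
  WithLp.toLp 2 fun i => ‖x‖ ^ (α i - 1) * x i

lemma measurable_anisoPolarMap : Measurable (anisoPolarMap α) := by
  unfold anisoPolarMap; fun_prop

lemma anisoPolarMap_smul {t : ℝ} (ht : 0 < t) {ω : EuclideanSpace ℝ (Fin n)} (hω : ‖ω‖ = 1) :
    anisoPolarMap α (t • ω) = anisoDilation α t ω := by
  ext i
  simp only [anisoPolarMap, anisoDilation_apply, norm_smul, hω, Real.norm_of_nonneg ht.le,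
    mul_one, PiLp.smul_apply, smul_eq_mul, ← mul_assoc, ← Real.rpow_add_one ht.ne',
    sub_add_cancel]

lemma anisoPolarMap_eq_anisoDilation {x : EuclideanSpace ℝ (Fin n)} (hx : x ≠ 0) :
    anisoPolarMap α x = anisoDilation α ‖x‖ (‖x‖⁻¹ • x) := by
  conv_lhs => rw [← smul_inv_smul₀ (norm_ne_zero_iff.2 hx) x]
  exact anisoPolarMap_smul α (norm_pos_iff.2 hx) (norm_smul_inv_norm (𝕜 := ℝ) hx)

lemma anisoPolarMap_ne_zero {x : EuclideanSpace ℝ (Fin n)} (hx : x ≠ 0) :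
    anisoPolarMap α x ≠ 0 := by
  intro h
  refine hx (PiLp.ext fun i => ?_)
  have hi : ‖x‖ ^ (α i - 1) * x i = 0 := congrArg (· i) h
  exact (mul_eq_zero.1 hi).resolve_left (Real.rpow_pos_of_pos (norm_pos_iff.2 hx) _).ne'

variable {α}

lemma anisoPolarMap_injOn (hα : ∀ i, 0 < α i) :
    Set.InjOn (anisoPolarMap α) {0}ᶜ := by
  intro x hx y hy h
  rw [anisoPolarMap_eq_anisoDilation α hx, anisoPolarMap_eq_anisoDilation α hy] at h
  obtain ⟨hnorm, hdir⟩ := eq_of_anisoDilation_eq (ω := ‖x‖⁻¹ • x) (η := ‖y‖⁻¹ • y) hα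
    (norm_pos_iff.2 hx) (norm_pos_iff.2 hy) (norm_smul_inv_norm (𝕜 := ℝ) hx)
    (norm_smul_inv_norm (𝕜 := ℝ) hy) h
  calc x = ‖x‖ • (‖x‖⁻¹ • x) := (smul_inv_smul₀ (norm_ne_zero_iff.2 hx) x).symm
    _ = ‖y‖ • (‖y‖⁻¹ • y) := by rw [hdir, hnorm]
    _ = y := smul_inv_smul₀ (norm_ne_zero_iff.2 hy) y

lemma image_anisoPolarMap_compl_zero (hα : ∀ i, 0 < α i) :
    anisoPolarMap α '' {0}ᶜ = {0}ᶜ := by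
  refine Set.Subset.antisymm ?_ fun y hy => ?_
  · rintro _ ⟨x, hx, rfl⟩
    exact anisoPolarMap_ne_zero α hx
  obtain ⟨t, ht, ω, hω, rfl⟩ := exists_anisoDilation_eq hα hy
  exact ⟨t • ω, smul_ne_zero ht.ne' (norm_ne_zero_iff.1 (hω ▸ one_ne_zero)),
    anisoPolarMap_smul α ht hω⟩

variable (α)

noncomputable def anisoPolarJacobian (x : EuclideanSpace ℝ (Fin n)) : Matrix (Fin n) (Fin n) ℝ :=
  diagonal (fun i => ‖x‖ ^ (α i - 1)) *
    (1 + vecMulVec (fun i => (α i - 1) * x i / ‖x‖ ^ 2) x.ofLp)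

lemma hasFDerivAt_anisoPolarMap {x : EuclideanSpace ℝ (Fin n)} (hx : x ≠ 0) :
    HasFDerivAt (anisoPolarMap α)
      (toLpLin 2 2 (anisoPolarJacobian α x)).toContinuousLinearMap x := by
  refine (hasStrictFDerivAt_euclidean.2 fun i => ?_).hasFDerivAt
  have h := (hasStrictFDerivAt_norm_rpow_of_ne_zero hx (α i - 1)).mul
    (EuclideanSpace.proj i : EuclideanSpace ℝ (Fin n) →L[ℝ] ℝ).hasStrictFDerivAt
  refine h.congr_fderiv ?_
  ext v
  have hr : 0 < ‖x‖ := norm_pos_iff.2 hx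
  have hpow : ‖x‖ ^ (α i - 1 - 2) = ‖x‖ ^ (α i - 1) / ‖x‖ ^ 2 := by
    rw [Real.rpow_sub hr, Real.rpow_two]
  simp [anisoPolarJacobian, toLpLin_apply, mulVec_diagonal,
    vecMulVec_mulVec, EuclideanSpace.inner_eq_star_dotProduct, dotProduct_comm v.ofLp, hpow]
  ring

lemma sum_sq_div_norm {ι : Type*} [Fintype ι] {x : EuclideanSpace ℝ ι} (hx : x ≠ 0) :
    ∑ i, (x i / ‖x‖) ^ 2 = 1 := by
  simp_rw [div_pow]
  rw [← Finset.sum_div, div_eq_one_iff_eq (pow_ne_zero 2 (norm_ne_zero_iff.2 hx)),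
    EuclideanSpace.norm_sq_eq]
  simp

lemma det_anisoPolarJacobian {x : EuclideanSpace ℝ (Fin n)} (hx : x ≠ 0) :
    (anisoPolarJacobian α x).det = ‖x‖ ^ (∑ i, α i - n) * ∑ i, α i * (x i / ‖x‖) ^ 2 := by
  have hr : 0 < ‖x‖ := norm_pos_iff.2 hx
  have hdot : x.ofLp ⬝ᵥ (fun i => (α i - 1) * x i / ‖x‖ ^ 2)
      = ∑ i, α i * (x i / ‖x‖) ^ 2 - ∑ i, (x i / ‖x‖) ^ 2 := by
    rw [dotProduct, ← Finset.sum_sub_distrib]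
    refine Finset.sum_congr rfl fun i _ => ?_
    field_simp
  rw [anisoPolarJacobian, det_mul, det_diagonal, vecMulVec_eq Unit,
    det_one_add_replicateCol_mul_replicateRow, hdot, sum_sq_div_norm hx,
    ← Real.rpow_sum_of_pos hr, Finset.sum_sub_distrib]
  simp

lemma det_fderiv_anisoPolarMap_smul {t : ℝ} (ht : 0 < t) {ω : EuclideanSpace ℝ (Fin n)}
    (hω : ‖ω‖ = 1) :
    (fderiv ℝ (anisoPolarMap α) (t • ω)).det = t ^ (∑ i, α i - n) * ∑ i, α i * ω i ^ 2 := by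
  have hx : t • ω ≠ 0 := smul_ne_zero ht.ne' (norm_ne_zero_iff.1 (hω ▸ one_ne_zero))
  rw [(hasFDerivAt_anisoPolarMap α hx).fderiv, ContinuousLinearMap.det,
    LinearMap.coe_toContinuousLinearMap, LinearMap.det_toLpLin, det_anisoPolarJacobian α hx,
    norm_smul, hω, Real.norm_of_nonneg ht.le, mul_one]
  congr 1
  refine Finset.sum_congr rfl fun i _ => ?_
  simp [ht.ne']

lemma lintegrand_anisoPolarMap_smul (hα : ∀ i, 0 ≤ α i) (f : EuclideanSpace ℝ (Fin n) → ENNReal)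
    {t : ℝ} (ht : 0 < t) {ω : EuclideanSpace ℝ (Fin n)} (hω : ‖ω‖ = 1) :
    ENNReal.ofReal |(fderiv ℝ (anisoPolarMap α) (t • ω)).det| * f (anisoPolarMap α (t • ω)) *
        ENNReal.ofReal (t ^ ((n : ℝ) - 1))
      = f (anisoDilation α t ω) * ENNReal.ofReal (t ^ (∑ i, α i - 1) * ∑ i, α i * ω i ^ 2) := by
  have hS : 0 ≤ ∑ i, α i * ω i ^ 2 := sum_nonneg fun i _ => mul_nonneg (hα i) (sq_nonneg _)
  rw [det_fderiv_anisoPolarMap_smul α ht hω, anisoPolarMap_smul α ht hω,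
    abs_of_nonneg (by positivity), mul_comm (ENNReal.ofReal _) (f _), mul_assoc,
    ← ENNReal.ofReal_mul (by positivity), mul_right_comm, ← Real.rpow_add ht]
  ring_nf

end PolarMap

/-- anisotropic polar coordinates: for every nonnegative measurable `f`,
`∫ f = ∫_{S^{n−1}} ∫_0^∞ f(δ_t ω) t^{Δ−1} (∑ αᵢ ωᵢ²) dt dσ(ω)`, where `σ` is the surface
measure on the Euclidean unit sphere (characterized by the standard polar coordinates). -/
theorem anisotropic_polar_coordinates
    (n : ℕ) (hn : 2 ≤ n) (α : Fin n → ℝ) (hα : ∀ i, 0 < α i)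
    (σ : Measure (Metric.sphere (0 : EuclideanSpace ℝ (Fin n)) 1))
    (hσ : ∀ g : EuclideanSpace ℝ (Fin n) → ENNReal, Measurable g →
      ∫⁻ x, g x = ∫⁻ ω, ∫⁻ t in Set.Ioi (0:ℝ),
        g (t • (ω : EuclideanSpace ℝ (Fin n))) * ENNReal.ofReal (t ^ ((n : ℝ) - 1)) ∂volume ∂σ)
    (f : EuclideanSpace ℝ (Fin n) → ENNReal) (hf : Measurable f) :
    ∫⁻ x, f x = ∫⁻ ω, ∫⁻ t in Set.Ioi (0:ℝ),
      f (WithLp.toLp 2 (fun i => t ^ (α i) * (ω : EuclideanSpace ℝ (Fin n)) i)) *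
        ENNReal.ofReal (t ^ ((∑ i, α i) - 1) * ∑ i, α i * ((ω : EuclideanSpace ℝ (Fin n)) i) ^ 2)
      ∂volume ∂σ := by
  -- makes `volume` atomless, so that `{0}` can be discarded
  have : Nonempty (Fin n) := ⟨⟨0, by omega⟩⟩
  set Φ := anisoPolarMap α
  have hΦ : ∀ x ∈ ({0}ᶜ : Set (EuclideanSpace ℝ (Fin n))),
      HasFDerivWithinAt Φ (fderiv ℝ Φ x) {0}ᶜ x := fun x hx =>
    (hasFDerivAt_anisoPolarMap α hx).differentiableAt.hasFDerivAt.hasFDerivWithinAt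
  have hg : Measurable fun x => ENNReal.ofReal |(fderiv ℝ Φ x).det| * f (Φ x) :=
    (ContinuousLinearMap.continuous_det.measurable.comp (measurable_fderiv ℝ Φ)).abs
      |>.ennreal_ofReal.mul (hf.comp (measurable_anisoPolarMap α))
  calc ∫⁻ x, f x = ∫⁻ x in Φ '' {0}ᶜ, f x := by
        rw [image_anisoPolarMap_compl_zero hα, restrict_compl_singleton]
    _ = ∫⁻ x in {0}ᶜ, ENNReal.ofReal |(fderiv ℝ Φ x).det| * f (Φ x) :=
        lintegral_image_eq_lintegral_abs_det_fderiv_mul volume (measurableSet_singleton 0).compl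
          hΦ (anisoPolarMap_injOn hα) f
    _ = ∫⁻ x, ENNReal.ofReal |(fderiv ℝ Φ x).det| * f (Φ x) := by
        rw [restrict_compl_singleton]
    _ = _ := hσ _ hg
    _ = _ := lintegral_congr fun ω => setLIntegral_congr_fun measurableSet_Ioi fun t ht =>
        lintegrand_anisoPolarMap_smul α (fun i => (hα i).le) f ht (norm_eq_of_mem_sphere ω)
end

section
/- Let φ ∈ 𝒮(ℝⁿ) be a Schwartz function with ∫_{ℝⁿ} φ(x) dx = 0. Then there exist universal constants C > 0 and α > 0 (depending only on the anisotropic norm ρ and the dimension n) and a sequence of functions ψ_m ∈ C_c^∞(ℝⁿ), m = 0, 1, 2, …, such that: (i) φ = Σ_{m≥0} ψ_m; (ii) supp ψ_m ⊆ {x : ρ(x) ≤ C 2^{αm}}; (iii) ∫_{ℝⁿ} ψ_m(x) dx = 0 for every m; and (iv) for every p ∈ [1,∞] and every M > 0 there is a constant C_{p,M} with ‖ψ_m‖_{L^p} ≤ C_{p,M} 2^{−mM} and ‖ψ̂_m‖_{L^p} ≤ C_{p,M} 2^{−mM} for all m, where ψ̂_m denotes the Fourier transform of ψ_m. -/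
/-!
Let `θ_m = b(2⁻ᵐ ·)`, where `b` is a smooth bump equal to `1` on the unit ball and vanishing
outside the ball of radius `2`, and let `σ₀ = θ₀`, `σ_{m+1} = θ_{m+1} - θ_m`. The pieces `σ_m φ`
live in `2^{m-1} ≤ ‖x‖ ≤ 2^{m+1}` and, by the Leibniz rule, have Schwartz seminorms bounded
uniformly in `m` (rescaling only shrinks the derivatives of `b`). Trading the weight `‖x‖^L` for
the factor `2^{-(m-1)L}`, every seminorm of `σ_m φ` is therefore `O(2^{-Mm})` for every `M`.

With `W` a bump of integral one supported in the ball of radius `2`, set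
`ψ_m = σ_m φ - (∫ σ_m φ) W`. Then `∫ ψ_m = 0`, and `∑_{m ≤ N} ψ_m = θ_N φ - (∫ θ_N φ) W`
tends pointwise to `φ - (∫ φ) W = φ`. The map `f ↦ f - (∫ f) W`, the Fourier transform and the
maps `𝓢 → Lᵖ` are continuous and linear, so they carry the decay of `σ_m φ` over to `ψ_m`,
`‖ψ_m‖_p` and `‖ψ̂_m‖_p`. Finally all `αᵢ ≥ 1` gives `ρ x ≤ R` whenever `‖x‖ ≤ R` and `R ≥ 1`,
so `supp ψ_m ⊆ {ρ ≤ 2^{m+1}}`.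
-/

open Set Filter Topology MeasureTheory Bornology Metric
open scoped ENNReal ContDiff FourierTransform SchwartzMap

noncomputable section

/-- `f m = O(2^{-Mm})` for every `M`, phrased through von Neumann boundedness so that it is
preserved by continuous linear maps. -/
def DyadicDecay {X : Type*} [AddCommGroup X] [Module ℝ X] [TopologicalSpace X] (f : ℕ → X) :
    Prop :=
  ∀ M : ℝ, IsVonNBounded ℝ (range fun m : ℕ => (2 : ℝ) ^ (M * m) • f m)

namespace DyadicDecay

section TopologicalVectorSpace

variable {X Y : Type*} [AddCommGroup X] [Module ℝ X] [TopologicalSpace X]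
  [AddCommGroup Y] [Module ℝ Y] [TopologicalSpace Y] {f : ℕ → X}

theorem map (hf : DyadicDecay f) (T : X →L[ℝ] Y) : DyadicDecay fun m => T (f m) := by
  intro M
  simpa [← range_comp, Function.comp_def] using (hf M).image T

theorem of_seminorm_le {ι : Type*} {p : SeminormFamily ℝ X ι} (hp : WithSeminorms p)
    (h : ∀ i (M : ℝ), ∃ C, ∀ m : ℕ, p i (f m) ≤ C * 2 ^ (-(M * m))) : DyadicDecay f := by
  intro M
  rw [hp.isVonNBounded_iff_seminorm_bounded]
  intro i
  obtain ⟨C, hC⟩ := h i M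
  refine ⟨|C| + 1, by positivity, ?_⟩
  rintro _ ⟨m, rfl⟩
  have h2 : (0 : ℝ) < 2 ^ (M * m) := by positivity
  calc p i ((2 : ℝ) ^ (M * m) • f m) = 2 ^ (M * m) * p i (f m) := by
        rw [map_smul_eq_mul, Real.norm_of_nonneg h2.le]
    _ ≤ 2 ^ (M * m) * (C * 2 ^ (-(M * m))) := by gcongr; exact hC m
    _ = C := by rw [Real.rpow_neg zero_le_two]; field_simp
    _ < |C| + 1 := by linarith [le_abs_self C]

end TopologicalVectorSpace

section NormedSpace

variable {X : Type*} [SeminormedAddCommGroup X] [NormedSpace ℝ X] {f : ℕ → X}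

theorem norm_le (hf : DyadicDecay f) (M : ℝ) : ∃ C, ∀ m : ℕ, ‖f m‖ ≤ C * 2 ^ (-(M * m)) := by
  obtain ⟨C, hC⟩ := (NormedSpace.isVonNBounded_iff' ℝ).mp (hf M)
  refine ⟨C, fun m => ?_⟩
  have h2 : (0 : ℝ) < 2 ^ (M * m) := by positivity
  have := hC _ ⟨m, rfl⟩
  rw [norm_smul, Real.norm_of_nonneg h2.le] at this
  rw [Real.rpow_neg zero_le_two, ← div_eq_mul_inv, le_div_iff₀ h2]
  linarith

theorem summable_norm (hf : DyadicDecay f) : Summable fun m => ‖f m‖ := by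
  obtain ⟨C, hC⟩ := hf.norm_le 1
  refine .of_nonneg_of_le (fun m => norm_nonneg _) hC ?_
  simpa [Real.rpow_neg, Real.rpow_natCast, ← inv_pow] using summable_geometric_two.mul_left C

end NormedSpace

end DyadicDecay

namespace SchwartzMap

variable {E F : Type*} [NormedAddCommGroup E] [NormedSpace ℝ E] [NormedAddCommGroup F]
  [NormedSpace ℝ F]

theorem seminorm_le_of_eq_zero_of_norm_lt {f : 𝓢(E, F)} {R : ℝ} (hR : 0 < R)
    (hf : ∀ x, ‖x‖ < R → f x = 0) (k l j : ℕ) :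
    SchwartzMap.seminorm ℝ k j f ≤ (R ^ l)⁻¹ * SchwartzMap.seminorm ℝ (k + l) j f := by
  refine seminorm_le_bound ℝ k j f (by positivity) fun x => ?_
  rcases lt_or_ge ‖x‖ R with hx | hx
  · have hzero : (f : E → F) =ᶠ[𝓝 x] 0 :=
      eventually_of_mem ((isOpen_lt continuous_norm continuous_const).mem_nhds hx) hf
    rw [(hzero.iteratedFDeriv ℝ j).eq_of_nhds, iteratedFDeriv_zero, Pi.zero_apply, norm_zero,
      mul_zero]
    positivity
  · have hxk : ‖x‖ ^ k ≤ (R ^ l)⁻¹ * ‖x‖ ^ (k + l) := by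
      rw [pow_add, inv_mul_eq_div, le_div_iff₀ (by positivity)]
      gcongr
    calc ‖x‖ ^ k * ‖iteratedFDeriv ℝ j f x‖
        ≤ (R ^ l)⁻¹ * (‖x‖ ^ (k + l) * ‖iteratedFDeriv ℝ j f x‖) := by
          rw [← mul_assoc]; gcongr
      _ ≤ (R ^ l)⁻¹ * SchwartzMap.seminorm ℝ (k + l) j f := by
          gcongr; exact le_seminorm ℝ _ _ f x

theorem seminorm_smulLeftCLM_le {g : E → ℝ} (hg : g.HasTemperateGrowth) {B : ℕ → ℝ}
    (hB : ∀ i x, ‖iteratedFDeriv ℝ i g x‖ ≤ B i) (f : 𝓢(E, F)) (k j : ℕ) :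
    SchwartzMap.seminorm ℝ k j (smulLeftCLM F g f) ≤
      ∑ i ∈ Finset.range (j + 1),
        (j.choose i : ℝ) * B i * SchwartzMap.seminorm ℝ k (j - i) f := by
  have hB0 : ∀ i, 0 ≤ B i := fun i => (norm_nonneg _).trans (hB i 0)
  refine seminorm_le_bound ℝ k j _
    (Finset.sum_nonneg fun i _ => by have := hB0 i; positivity) fun x => ?_
  rw [smulLeftCLM_apply hg]
  calc ‖x‖ ^ k * ‖iteratedFDeriv ℝ j (fun y => g y • f y) x‖
      ≤ ‖x‖ ^ k * ∑ i ∈ Finset.range (j + 1),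
          (j.choose i : ℝ) * ‖iteratedFDeriv ℝ i g x‖ * ‖iteratedFDeriv ℝ (j - i) f x‖ := by
        gcongr
        exact norm_iteratedFDeriv_smul_le hg.1 (f.smooth ⊤) x (mod_cast le_top)
    _ = ∑ i ∈ Finset.range (j + 1), (j.choose i : ℝ) * ‖iteratedFDeriv ℝ i g x‖ *
          (‖x‖ ^ k * ‖iteratedFDeriv ℝ (j - i) f x‖) := by
        rw [Finset.mul_sum]; congr! 1; ring
    _ ≤ _ := by
        gcongr with i
        · have := hB0 i; positivity
        · exact hB i x
        · exact le_seminorm ℝ _ _ f x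

theorem dyadicDecay_of_bounded_of_eq_zero {f : ℕ → 𝓢(E, F)}
    (hb : ∀ k j, ∃ B, ∀ m, SchwartzMap.seminorm ℝ k j (f m) ≤ B)
    (hz : ∀ m x, ‖x‖ < 2 ^ m → f (m + 1) x = 0) : DyadicDecay f := by
  refine .of_seminorm_le (schwartz_withSeminorms ℝ E F) fun ⟨k, j⟩ M => ?_
  set L := ⌈M⌉₊
  obtain ⟨B₀, hB₀⟩ := hb k j
  obtain ⟨B, hB⟩ := hb (k + L) j
  have hB0 : 0 ≤ B := (apply_nonneg _ _).trans (hB 0)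
  refine ⟨max B₀ (2 ^ M * B), fun m => ?_⟩
  rcases m with _ | m
  · simpa using (hB₀ 0).trans (le_max_left _ _)
  have hpow : (((2 : ℝ) ^ m) ^ L)⁻¹ ≤ 2 ^ M * 2 ^ (-(M * ↑(m + 1))) := by
    rw [← pow_mul, ← Real.rpow_natCast, ← Real.rpow_neg zero_le_two, ← Real.rpow_add two_pos]
    apply Real.rpow_le_rpow_of_exponent_le one_le_two
    push_cast
    nlinarith [Nat.le_ceil M, (m.cast_nonneg : (0 : ℝ) ≤ m)]
  calc SchwartzMap.seminorm ℝ k j (f (m + 1))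
      ≤ ((2 ^ m) ^ L)⁻¹ * SchwartzMap.seminorm ℝ (k + L) j (f (m + 1)) :=
        seminorm_le_of_eq_zero_of_norm_lt (by positivity) (hz m) k L j
    _ ≤ (2 ^ M * 2 ^ (-(M * ↑(m + 1)))) * B := by gcongr; exact hB _
    _ ≤ max B₀ (2 ^ M * B) * 2 ^ (-(M * ↑(m + 1))) := by
        rw [mul_right_comm]; gcongr; exact le_max_right _ _

end SchwartzMap

theorem DyadicDecay.eLpNorm_le {E F : Type*} [NormedAddCommGroup E] [NormedSpace ℝ E]
    [MeasurableSpace E] [OpensMeasurableSpace E] [NormedAddCommGroup F] [NormedSpace ℝ F]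
    [SecondCountableTopologyEither E F] {μ : Measure E} [μ.HasTemperateGrowth]
    {f : ℕ → 𝓢(E, F)} (hf : DyadicDecay f) {p : ℝ≥0∞} (hp : 1 ≤ p) (M : ℝ) :
    ∃ C, ∀ m : ℕ, eLpNorm (f m) p μ ≤ ENNReal.ofReal (C * 2 ^ (-(M * m))) := by
  have : Fact (1 ≤ p) := ⟨hp⟩
  obtain ⟨C, hC⟩ := (hf.map (SchwartzMap.toLpCLM ℝ F p μ)).norm_le M
  refine ⟨C, fun m => ?_⟩
  rw [← ENNReal.ofReal_toReal ((f m).eLpNorm_lt_top p μ).ne, ← SchwartzMap.norm_toLp]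
  exact ENNReal.ofReal_le_ofReal (hC m)

section DyadicPartition

variable {V : Type*} [NormedAddCommGroup V] [InnerProductSpace ℝ V]

def unitBump (V : Type*) [NormedAddCommGroup V] [InnerProductSpace ℝ V] : ContDiffBump (0 : V) :=
  ⟨1, 2, one_pos, one_lt_two⟩

def dyadicCutoff (m : ℕ) (x : V) : ℝ := unitBump V (((2 : ℝ) ^ m)⁻¹ • x)

def dyadicPartition : ℕ → V → ℝ
  | 0 => dyadicCutoff 0
  | m + 1 => dyadicCutoff (m + 1) - dyadicCutoff m

theorem contDiff_dyadicCutoff {n : ℕ∞} (m : ℕ) : ContDiff ℝ n (dyadicCutoff (V := V) m) :=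
  (unitBump V).contDiff.comp (contDiff_const_smul _)

theorem dyadicCutoff_nonneg (m : ℕ) (x : V) : 0 ≤ dyadicCutoff m x := (unitBump V).nonneg

theorem dyadicCutoff_le_one (m : ℕ) (x : V) : dyadicCutoff m x ≤ 1 := (unitBump V).le_one

theorem dyadicCutoff_eq_one {m : ℕ} {x : V} (h : ‖x‖ ≤ 2 ^ m) : dyadicCutoff m x = 1 := by
  apply ContDiffBump.one_of_mem_closedBall
  rw [mem_closedBall_zero_iff, norm_smul, norm_inv, norm_pow, Real.norm_two,
    inv_mul_le_iff₀ (by positivity)]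
  simpa [unitBump] using h

theorem dyadicCutoff_eq_zero {m : ℕ} {x : V} (h : 2 ^ (m + 1) ≤ ‖x‖) :
    dyadicCutoff m x = 0 := by
  apply ContDiffBump.zero_of_le_dist
  rw [dist_zero_right, norm_smul, norm_inv, norm_pow, Real.norm_two,
    le_inv_mul_iff₀ (by positivity)]
  simpa [unitBump, pow_succ] using h

theorem tendsto_dyadicCutoff_smul {F : Type*} [NormedAddCommGroup F] [NormedSpace ℝ F]
    (x : V) (v : F) : Tendsto (fun N => dyadicCutoff N x • v) atTop (𝓝 v) := by
  obtain ⟨N₀, hN₀⟩ := pow_unbounded_of_one_lt ‖x‖ one_lt_two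
  refine tendsto_const_nhds.congr' (eventually_atTop.mpr ⟨N₀, fun N hN => ?_⟩)
  dsimp only
  rw [dyadicCutoff_eq_one (hN₀.le.trans (pow_le_pow_right₀ one_le_two hN)), one_smul]

theorem norm_iteratedFDeriv_dyadicCutoff_le [FiniteDimensional ℝ V] (j : ℕ) :
    ∃ B, ∀ m (x : V), ‖iteratedFDeriv ℝ j (dyadicCutoff m) x‖ ≤ B := by
  obtain ⟨B, hB⟩ := ((unitBump V).hasCompactSupport.iteratedFDeriv j).exists_bound_of_continuous
    ((unitBump V).contDiff.continuous_iteratedFDeriv (mod_cast le_top))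
  refine ⟨B, fun m x => ?_⟩
  have hcomp : dyadicCutoff (V := V) m = fun y => unitBump V (((2 : ℝ) ^ m)⁻¹ • y) := rfl
  have hscale : ((2 : ℝ) ^ m)⁻¹ ^ j ≤ 1 :=
    pow_le_one₀ (by positivity) (inv_le_one_of_one_le₀ (one_le_pow₀ one_le_two))
  rw [hcomp, iteratedFDeriv_comp_const_smul _ (unitBump V).contDiff, norm_smul, norm_pow,
    norm_inv, norm_pow, Real.norm_two]
  simpa using mul_le_mul hscale (hB _) (norm_nonneg _) zero_le_one

theorem contDiff_dyadicPartition {n : ℕ∞} (m : ℕ) :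
    ContDiff ℝ n (dyadicPartition (V := V) m) := by
  cases m with
  | zero => exact contDiff_dyadicCutoff 0
  | succ m => exact (contDiff_dyadicCutoff _).sub (contDiff_dyadicCutoff _)

theorem sum_range_dyadicPartition (N : ℕ) (x : V) :
    ∑ m ∈ Finset.range (N + 1), dyadicPartition m x = dyadicCutoff N x := by
  induction N with
  | zero => simp [dyadicPartition]
  | succ N ih =>
    rw [Finset.sum_range_succ, ih, dyadicPartition, Pi.sub_apply, add_sub_cancel]

theorem dyadicPartition_succ_eq_zero {m : ℕ} {x : V} (h : ‖x‖ ≤ 2 ^ m) :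
    dyadicPartition (m + 1) x = 0 := by
  simp [dyadicPartition, dyadicCutoff_eq_one h,
    dyadicCutoff_eq_one (h.trans (pow_le_pow_right₀ one_le_two m.le_succ))]

theorem dyadicPartition_eq_zero {m : ℕ} {x : V} (h : 2 ^ (m + 1) ≤ ‖x‖) :
    dyadicPartition m x = 0 := by
  cases m with
  | zero => exact dyadicCutoff_eq_zero h
  | succ m =>
    simp [dyadicPartition, dyadicCutoff_eq_zero h,
      dyadicCutoff_eq_zero ((pow_le_pow_right₀ one_le_two (m + 1).le_succ).trans h)]

variable [FiniteDimensional ℝ V]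

theorem hasTemperateGrowth_dyadicPartition (m : ℕ) :
    (dyadicPartition (V := V) m).HasTemperateGrowth := by
  refine HasCompactSupport.hasTemperateGrowth ?_ (contDiff_dyadicPartition m)
  refine .intro (isCompact_closedBall 0 (2 ^ (m + 1))) fun x hx => dyadicPartition_eq_zero ?_
  exact (not_le.mp (by simpa using hx)).le

theorem norm_iteratedFDeriv_dyadicPartition_le (j : ℕ) :
    ∃ B, ∀ m (x : V), ‖iteratedFDeriv ℝ j (dyadicPartition m) x‖ ≤ B := by
  obtain ⟨B, hB⟩ := norm_iteratedFDeriv_dyadicCutoff_le (V := V) j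
  refine ⟨2 * B, fun m x => ?_⟩
  cases m with
  | zero => exact (hB 0 x).trans (by linarith [(norm_nonneg _).trans (hB 0 x)])
  | succ m =>
    rw [dyadicPartition, iteratedFDeriv_sub_apply (contDiff_dyadicCutoff _).contDiffAt
      (contDiff_dyadicCutoff _).contDiffAt]
    linarith [norm_sub_le (iteratedFDeriv ℝ j (dyadicCutoff (V := V) (m + 1)) x)
      (iteratedFDeriv ℝ j (dyadicCutoff m) x), hB (m + 1) x, hB m x]

end DyadicPartition

namespace SchwartzMap

section DyadicPieces

variable {V F : Type*} [NormedAddCommGroup V] [InnerProductSpace ℝ V] [FiniteDimensional ℝ V]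
  [NormedAddCommGroup F] [NormedSpace ℝ F]

def dyadicPiece (φ : 𝓢(V, F)) (m : ℕ) : 𝓢(V, F) := smulLeftCLM F (dyadicPartition m) φ

theorem dyadicPiece_apply (φ : 𝓢(V, F)) (m : ℕ) (x : V) :
    dyadicPiece φ m x = dyadicPartition m x • φ x :=
  smulLeftCLM_apply_apply (hasTemperateGrowth_dyadicPartition m) φ x

theorem sum_range_dyadicPiece_apply (φ : 𝓢(V, F)) (N : ℕ) (x : V) :
    (∑ m ∈ Finset.range (N + 1), dyadicPiece φ m) x = dyadicCutoff N x • φ x := by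
  simp_rw [sum_apply, dyadicPiece_apply, ← Finset.sum_smul, sum_range_dyadicPartition]

theorem dyadicDecay_dyadicPiece (φ : 𝓢(V, F)) : DyadicDecay (dyadicPiece φ) := by
  refine dyadicDecay_of_bounded_of_eq_zero (fun k j => ?_) fun m x hx => ?_
  · choose B hB using fun i => norm_iteratedFDeriv_dyadicPartition_le (V := V) i
    exact ⟨_, fun m =>
      seminorm_smulLeftCLM_le (hasTemperateGrowth_dyadicPartition m) (fun i => hB i m) φ k j⟩
  · rw [dyadicPiece_apply, dyadicPartition_succ_eq_zero hx.le, zero_smul]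

theorem tendsto_integral_dyadicCutoff_smul [MeasurableSpace V] [BorelSpace V] (φ : 𝓢(V, F)) :
    Tendsto (fun N => ∫ x, dyadicCutoff N x • φ x) atTop (𝓝 (∫ x, φ x)) := by
  refine tendsto_integral_of_dominated_convergence (fun x => ‖φ x‖)
    (fun N => ((contDiff_dyadicCutoff (n := 0) N).continuous.smul
      φ.continuous).aestronglyMeasurable)
    φ.integrable.norm (fun N => ae_of_all _ fun x => ?_)
    (ae_of_all _ fun x => tendsto_dyadicCutoff_smul x (φ x))
  rw [norm_smul, Real.norm_of_nonneg (dyadicCutoff_nonneg N x)]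
  exact mul_le_of_le_one_left (norm_nonneg _) (dyadicCutoff_le_one N x)

end DyadicPieces

variable {V : Type*} [NormedAddCommGroup V] [InnerProductSpace ℝ V] [FiniteDimensional ℝ V]
  [MeasurableSpace V] [BorelSpace V]

def meanZeroProj (W : 𝓢(V, ℂ)) : 𝓢(V, ℂ) →L[ℂ] 𝓢(V, ℂ) :=
  .id ℂ _ - (ContinuousLinearMap.toSpanSingleton ℂ W).comp (integralCLM ℂ volume)

theorem meanZeroProj_apply (W f : 𝓢(V, ℂ)) (x : V) :
    meanZeroProj W f x = f x - (∫ y, f y) * W x := by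
  simp [meanZeroProj]

theorem integral_meanZeroProj {W : 𝓢(V, ℂ)} (hW : ∫ x, W x = 1) (f : 𝓢(V, ℂ)) :
    ∫ x, meanZeroProj W f x = 0 := by
  simp_rw [meanZeroProj_apply]
  rw [integral_sub f.integrable (W.integrable.const_mul _), integral_const_mul, hW, mul_one,
    sub_self]

def normalizedBump (V : Type*) [NormedAddCommGroup V] [InnerProductSpace ℝ V]
    [FiniteDimensional ℝ V] [MeasurableSpace V] [BorelSpace V] : 𝓢(V, ℂ) :=
  HasCompactSupport.toSchwartzMap (f := fun x => ((unitBump V).normed volume x : ℂ))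
    (((unitBump V).hasCompactSupport_normed (μ := volume)).comp_left Complex.ofReal_zero)
    (Complex.ofRealCLM.contDiff.comp (unitBump V).contDiff_normed)

theorem normalizedBump_apply (x : V) :
    normalizedBump V x = ((unitBump V).normed volume x : ℂ) :=
  rfl

theorem integral_normalizedBump : ∫ x, normalizedBump V x = 1 := by
  simp_rw [normalizedBump_apply]
  rw [integral_complex_ofReal, (unitBump V).integral_normed, Complex.ofReal_one]

theorem normalizedBump_eq_zero {x : V} (h : 2 ≤ ‖x‖) : normalizedBump V x = 0 := by
  have : x ∉ Function.support ((unitBump V).normed volume) := by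
    simpa [(unitBump V).support_normed_eq] using (show (unitBump V).rOut ≤ ‖x‖ from h)
  rw [normalizedBump_apply, Function.notMem_support.mp this, Complex.ofReal_zero]

def meanZeroPiece (φ : 𝓢(V, ℂ)) (m : ℕ) : 𝓢(V, ℂ) :=
  meanZeroProj (normalizedBump V) (dyadicPiece φ m)

theorem integral_meanZeroPiece (φ : 𝓢(V, ℂ)) (m : ℕ) : ∫ x, meanZeroPiece φ m x = 0 :=
  integral_meanZeroProj integral_normalizedBump _

theorem meanZeroPiece_eq_zero (φ : 𝓢(V, ℂ)) {m : ℕ} {x : V} (h : 2 ^ (m + 1) ≤ ‖x‖) :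
    meanZeroPiece φ m x = 0 := by
  rw [meanZeroPiece, meanZeroProj_apply, dyadicPiece_apply, dyadicPartition_eq_zero h,
    normalizedBump_eq_zero ((le_self_pow₀ one_le_two m.succ_ne_zero).trans h)]
  simp

theorem support_meanZeroPiece_subset (φ : 𝓢(V, ℂ)) (m : ℕ) :
    Function.support (meanZeroPiece φ m) ⊆ closedBall 0 (2 ^ (m + 1)) := fun x hx => by
  by_contra h
  exact hx (meanZeroPiece_eq_zero φ (not_le.mp (by simpa using h)).le)

theorem hasCompactSupport_meanZeroPiece (φ : 𝓢(V, ℂ)) (m : ℕ) :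
    HasCompactSupport (meanZeroPiece φ m) :=
  .intro (isCompact_closedBall 0 _) fun _ hx =>
    Function.notMem_support.mp fun h => hx (support_meanZeroPiece_subset φ m h)

theorem dyadicDecay_meanZeroPiece (φ : 𝓢(V, ℂ)) : DyadicDecay (meanZeroPiece φ) :=
  (dyadicDecay_dyadicPiece φ).map ((meanZeroProj (normalizedBump V)).restrictScalars ℝ)

theorem sum_range_meanZeroPiece_apply (φ : 𝓢(V, ℂ)) (N : ℕ) (x : V) :
    ∑ m ∈ Finset.range (N + 1), meanZeroPiece φ m x =
      dyadicCutoff N x • φ x - (∫ y, dyadicCutoff N y • φ y) * normalizedBump V x := by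
  rw [← sum_apply]
  simp_rw [meanZeroPiece, ← map_sum, meanZeroProj_apply, sum_range_dyadicPiece_apply]

theorem hasSum_meanZeroPiece {φ : 𝓢(V, ℂ)} (hφ : ∫ x, φ x = 0) (x : V) :
    HasSum (fun m => meanZeroPiece φ m x) (φ x) := by
  have hsummable : Summable fun m => meanZeroPiece φ m x :=
    .of_norm_bounded
      ((dyadicDecay_meanZeroPiece φ).map (toBoundedContinuousFunctionCLM ℝ V ℂ)).summable_norm
      fun m => BoundedContinuousFunction.norm_coe_le_norm
        (toBoundedContinuousFunctionCLM ℝ V ℂ (meanZeroPiece φ m)) x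
  rw [hsummable.hasSum_iff_tendsto_nat, ← tendsto_add_atTop_iff_nat 1]
  simp_rw [sum_range_meanZeroPiece_apply]
  simpa [hφ] using (tendsto_dyadicCutoff_smul x (φ x)).sub
    ((tendsto_integral_dyadicCutoff_smul φ).mul_const (normalizedBump V x))

end SchwartzMap

theorem anisotropicNorm_le_of_norm_le {n : ℕ} {α : Fin n → ℝ} (hα : ∀ i, 1 ≤ α i)
    {ρ : EuclideanSpace ℝ (Fin n) → ℝ} (hρ0 : ρ 0 = 0)
    (hρ : ∀ x : EuclideanSpace ℝ (Fin n), x ≠ 0 →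
      0 < ρ x ∧ ∑ i, (x i) ^ 2 * (ρ x) ^ (-(2 * α i)) = 1)
    {x : EuclideanSpace ℝ (Fin n)} {R : ℝ} (hR : 1 ≤ R) (hx : ‖x‖ ≤ R) : ρ x ≤ R := by
  rcases eq_or_ne x 0 with rfl | hx0
  · linarith
  obtain ⟨-, hsum⟩ := hρ x hx0
  by_contra! hlt
  have hr : 1 < ρ x := hR.trans_lt hlt
  have hle : ∑ i, (x i) ^ 2 * (ρ x) ^ (-(2 * α i)) ≤ ‖x‖ ^ 2 * (ρ x) ^ (-2 : ℝ) := by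
    simp_rw [EuclideanSpace.norm_sq_eq, Real.norm_eq_abs, sq_abs, Finset.sum_mul]
    gcongr with i
    · exact hr.le
    · linarith [hα i]
  have hlt1 : ‖x‖ ^ 2 * (ρ x) ^ (-2 : ℝ) < 1 := by
    rw [Real.rpow_neg (by positivity), Real.rpow_two, ← div_eq_mul_inv,
      div_lt_one (by positivity)]
    gcongr
    linarith
  linarith

/-- decomposition lemma. A Schwartz function `φ` with vanishing integral can be
written as `φ = Σ_{m≥0} ψ_m` with `ψ_m ∈ C_c^∞`, `supp ψ_m ⊆ {ρ(x) ≤ C 2^{αm}}`,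
`∫ ψ_m = 0`, and for every `p ∈ [1,∞]`, `M > 0`, the norms `‖ψ_m‖_{L^p}` and
`‖ψ̂_m‖_{L^p}` are `O(2^{−mM})`. -/
theorem schwartz_decomposition
    (n : ℕ) (α : Fin n → ℝ) (hα : ∀ i, 1 ≤ α i)
    (ρ : EuclideanSpace ℝ (Fin n) → ℝ) (hρ0 : ρ 0 = 0)
    (hρ : ∀ x : EuclideanSpace ℝ (Fin n), x ≠ 0 →
      0 < ρ x ∧ ∑ i, (x i) ^ 2 * (ρ x) ^ (-(2 * α i)) = 1)
    (φ : SchwartzMap (EuclideanSpace ℝ (Fin n)) ℂ) (hφ : ∫ x, φ x = 0) :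
    ∃ C > (0:ℝ), ∃ a > (0:ℝ), ∃ ψ : ℕ → EuclideanSpace ℝ (Fin n) → ℂ,
      (∀ x, HasSum (fun m => ψ m x) (φ x)) ∧
      (∀ m, ContDiff ℝ (⊤ : ℕ∞) (ψ m) ∧ HasCompactSupport (ψ m) ∧
        Function.support (ψ m) ⊆ {x | ρ x ≤ C * (2:ℝ) ^ (a * m)} ∧
        ∫ x, ψ m x = 0) ∧
      (∀ p : ENNReal, 1 ≤ p → ∀ M > (0:ℝ), ∃ CpM : ℝ, ∀ m,
        eLpNorm (ψ m) p volume ≤ ENNReal.ofReal (CpM * (2:ℝ) ^ (-(M * m))) ∧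
        eLpNorm (FourierTransform.fourier (ψ m)) p volume ≤
          ENNReal.ofReal (CpM * (2:ℝ) ^ (-(M * m)))) := by
  refine ⟨2, two_pos, 1, one_pos, fun m => φ.meanZeroPiece m,
    SchwartzMap.hasSum_meanZeroPiece hφ, fun m => ⟨(φ.meanZeroPiece m).smooth ⊤,
      φ.hasCompactSupport_meanZeroPiece m, fun x hx => ?_, φ.integral_meanZeroPiece m⟩,
    fun p hp M _ => ?_⟩
  · have hx' : ‖x‖ ≤ 2 ^ (m + 1) := by simpa using φ.support_meanZeroPiece_subset m hx
    calc ρ x ≤ 2 ^ (m + 1) :=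
          anisotropicNorm_le_of_norm_le hα hρ0 hρ (one_le_pow₀ one_le_two) hx'
      _ = 2 * 2 ^ (1 * (m : ℝ)) := by rw [one_mul, Real.rpow_natCast, pow_succ']
  · have hψ := φ.dyadicDecay_meanZeroPiece
    obtain ⟨C₁, h₁⟩ := hψ.eLpNorm_le (μ := volume) hp M
    obtain ⟨C₂, h₂⟩ :=
      (hψ.map (SchwartzMap.fourierTransformCLM ℝ)).eLpNorm_le (μ := volume) hp M
    refine ⟨max C₁ C₂, fun m => ⟨(h₁ m).trans ?_, (h₂ m).trans ?_⟩⟩ <;> gcongr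
    exacts [le_max_left _ _, le_max_right _ _]
end
end

section
/- For every z ∈ ℂ with Re z < −1, every ξ ∈ ℝ and every η ≠ 0, the integral ∫_ℝ e^{−2πi(ξt + ηγ(t))} (1 + η²γ(t)²)^z dt converges absolutely and satisfies the bound |2π ξ ∫_ℝ e^{−2πi(ξt + ηγ(t))} (1 + η²γ(t)²)^z dt| ≤ C (1 + |Im z|), where C depends only on Re z (not on ξ, η, Im z, or γ). (This quantity is |ξ ∂m_z/∂ξ (ξ,η)|, where m_z(ξ,η) = p.v. ∫_ℝ e^{−2πi(ξt + ηγ(t))} (1 + η²γ(t)²)^z dt/t.) -/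
/-!
Put `f = η γ` and `G u = e^{-2πiu} (1 + u²)^z`. The integral is the Fourier transform of
`G ∘ f` at `ξ`, so `2πiξ` times it is the Fourier transform of `(G ∘ f)'`, whose modulus is at
most `‖(G ∘ f)'‖₁`. Since `γ` is strictly increasing, `f` is injective and the substitution
`u = f t` bounds this by `‖G'‖₁`. Finally
`|G' u| ≤ (2π + |z|) (1 + u²)^{Re z} ≤ (2π + |z|) / (1 + u²)` has integral at most
`(2π + |z|) π ≤ (2π + |Re z| + 1) π (1 + |Im z|)`. The integrability of `G ∘ f` comes from
convexity, which gives `|γ t| ≥ γ 1 * |t|` for `|t| ≥ 1`.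
-/

open MeasureTheory Topology Filter

open Real
open scoped FourierTransform

namespace Function.Odd

variable {f : ℝ → ℝ}

lemma hasDerivWithinAt_neg (hf : f.Odd) {d x : ℝ} {s : Set ℝ}
    (h : HasDerivWithinAt f d s x) : HasDerivWithinAt f d (-s) (-x) := by
  have hneg : HasDerivWithinAt (fun t : ℝ => -t) (-1) (-s) (-x) :=
    (hasDerivAt_neg (-x)).hasDerivWithinAt
  have := (HasDerivWithinAt.comp (-x) (by simpa using h) hneg fun t ht => ht).neg
  have hf' : (-f ∘ fun t => -t) = f := funext fun t => by simp [hf.eq]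
  simpa [hf'] using this

lemma hasDerivAt_of_hasDerivWithinAt_Ici (hf : f.Odd) {f' : ℝ → ℝ}
    (hd : ∀ t, 0 ≤ t → HasDerivWithinAt f (f' t) (Set.Ici 0) t) (t : ℝ) :
    HasDerivAt f (f' |t|) t := by
  have hd_neg : ∀ t ≤ 0, HasDerivWithinAt f (f' |t|) (Set.Iic 0) t := fun t ht => by
    simpa [abs_of_nonpos ht] using hf.hasDerivWithinAt_neg (hd (-t) (neg_nonneg.2 ht))
  rcases lt_trichotomy t 0 with ht | rfl | ht
  · exact (hd_neg t ht.le).hasDerivAt (Iic_mem_nhds ht)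
  · have := (hd 0 le_rfl).union (by simpa using hd_neg 0 le_rfl)
    rw [Set.Ici_union_Iic, hasDerivWithinAt_univ] at this
    rwa [abs_zero]
  · simpa [abs_of_pos ht] using (hd t ht.le).hasDerivAt (Ici_mem_nhds ht)

lemma strictMono_of_strictMonoOn_Ici (hf : f.Odd)
    (hmono : StrictMonoOn f (Set.Ici 0)) : StrictMono f := by
  have hmono_neg : StrictMonoOn f (Set.Iic 0) := fun s hs t ht hst => by
    have := hmono (Set.mem_Ici.2 (neg_nonneg.2 ht)) (Set.mem_Ici.2 (neg_nonneg.2 hs))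
      (neg_lt_neg hst)
    rw [hf, hf] at this
    exact neg_lt_neg_iff.1 this
  have := hmono_neg.union hmono isGreatest_Iic isLeast_Ici
  rwa [Set.Iic_union_Ici, strictMonoOn_univ] at this

lemma mul_abs_le_abs_of_convexOn (hf : f.Odd)
    (hconv : ConvexOn ℝ (Set.Ici 0) f) {t : ℝ} (ht : 1 ≤ |t|) : f 1 * |t| ≤ |f t| := by
  have hslope := hconv.secant_mono (a := 0) (x := 1) (y := |t|) Set.self_mem_Ici
    (Set.mem_Ici.2 zero_le_one) (Set.mem_Ici.2 (abs_nonneg t)) one_ne_zero (by positivity) ht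
  simp only [hf.map_zero, sub_zero, div_one] at hslope
  have hft : f |t| ≤ |f t| := by
    rcases abs_choice t with h | h <;> rw [h]
    · exact le_abs_self _
    · rw [hf]; exact neg_le_abs _
  calc f 1 * |t| ≤ f |t| := (le_div_iff₀ (by positivity)).1 hslope
    _ ≤ |f t| := hft

lemma exists_mul_one_add_sq_le (hf : f.Odd)
    (hmono : StrictMonoOn f (Set.Ici 0)) (hconv : ConvexOn ℝ (Set.Ici 0) f)
    {η : ℝ} (hη : η ≠ 0) : ∃ c > 0, ∀ t, c * (1 + t ^ 2) ≤ 1 + (η * f t) ^ 2 := by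
  have hf1 : 0 < f 1 := by
    simpa [hf.map_zero] using
      hmono Set.self_mem_Ici (Set.mem_Ici.2 zero_le_one) zero_lt_one
  refine ⟨min (1 / 2) ((η * f 1) ^ 2), lt_min one_half_pos (by positivity), fun t => ?_⟩
  rcases le_total |t| 1 with ht | ht
  · have : t ^ 2 ≤ 1 := by nlinarith [sq_abs t, abs_nonneg t]
    nlinarith [min_le_left (1 / 2 : ℝ) ((η * f 1) ^ 2), sq_nonneg (η * f t)]
  · have hlin := hf.mul_abs_le_abs_of_convexOn hconv ht
    have : (η * f 1) ^ 2 * t ^ 2 ≤ (η * f t) ^ 2 :=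
      calc (η * f 1) ^ 2 * t ^ 2 = (|η| * (f 1 * |t|)) ^ 2 := by
            simp only [mul_pow, sq_abs]; ring
        _ ≤ (|η| * |f t|) ^ 2 := by gcongr
        _ = (η * f t) ^ 2 := by simp only [mul_pow, sq_abs]
    nlinarith [min_le_left (1 / 2 : ℝ) ((η * f 1) ^ 2),
      min_le_right (1 / 2 : ℝ) ((η * f 1) ^ 2), sq_nonneg t]

end Function.Odd

section ChangeOfVariables

variable {E : Type*} [NormedAddCommGroup E] [NormedSpace ℝ E]
  {G : ℝ → E} {f f' : ℝ → ℝ}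

lemma norm_deriv_comp (hG : Differentiable ℝ G) (hf : ∀ x, HasDerivAt f (f' x) x) (x : ℝ) :
    ‖deriv (G ∘ f) x‖ = |f' x| * ‖deriv G (f x)‖ := by
  rw [((hG (f x)).hasDerivAt.scomp x (hf x)).deriv, norm_smul, Real.norm_eq_abs]

lemma integrable_deriv_comp [CompleteSpace E] (hG : Differentiable ℝ G)
    (hf : ∀ x, HasDerivAt f (f' x) x) (hinj : Function.Injective f) (hG' : Integrable (deriv G)) :
    Integrable (deriv (G ∘ f)) := by
  have h := (integrableOn_image_iff_integrableOn_abs_deriv_smul MeasurableSet.univ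
    (fun x _ => (hf x).hasDerivWithinAt) hinj.injOn fun u => ‖deriv G u‖).1
    hG'.norm.integrableOn
  rw [integrableOn_univ] at h
  refine h.mono' (aestronglyMeasurable_deriv _ _) (ae_of_all _ fun x => ?_)
  rw [norm_deriv_comp hG hf, smul_eq_mul]

lemma integral_norm_deriv_comp_le (hG : Differentiable ℝ G) (hf : ∀ x, HasDerivAt f (f' x) x)
    (hinj : Function.Injective f) (hG' : Integrable (deriv G)) :
    ∫ x, ‖deriv (G ∘ f) x‖ ≤ ∫ u, ‖deriv G u‖ :=
  calc ∫ x, ‖deriv (G ∘ f) x‖ = ∫ u in f '' Set.univ, ‖deriv G u‖ := by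
        rw [integral_image_eq_integral_abs_deriv_smul MeasurableSet.univ
          (fun x _ => (hf x).hasDerivWithinAt) hinj.injOn, setIntegral_univ]
        simp_rw [norm_deriv_comp hG hf, smul_eq_mul]
    _ ≤ ∫ u, ‖deriv G u‖ :=
        setIntegral_le_integral hG'.norm (ae_of_all _ fun _ => norm_nonneg _)

end ChangeOfVariables

lemma two_pi_mul_abs_mul_norm_fourier_le_integral_norm_deriv {E : Type*} [NormedAddCommGroup E]
    [NormedSpace ℂ E] {g : ℝ → E} (hg : Integrable g) (hd : Differentiable ℝ g)
    (hg' : Integrable (deriv g)) (ξ : ℝ) : 2 * π * |ξ| * ‖𝓕 g ξ‖ ≤ ∫ t, ‖deriv g t‖ :=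
  calc 2 * π * |ξ| * ‖𝓕 g ξ‖ = ‖𝓕 (deriv g) ξ‖ := by
        rw [Real.fourier_deriv hg hd hg', norm_smul]
        simp [abs_of_pos pi_pos]
    _ ≤ ∫ t, ‖deriv g t‖ :=
        VectorFourier.norm_fourierIntegral_le_integral_norm _ _ _ _ _

noncomputable def oscillatoryWeight (z : ℂ) (u : ℝ) : ℂ :=
  Complex.exp (↑(-(2 * π * u)) * Complex.I) * ((1 + u ^ 2 : ℝ) : ℂ) ^ z

namespace oscillatoryWeight

variable (z : ℂ)

lemma norm_eq (u : ℝ) : ‖oscillatoryWeight z u‖ = (1 + u ^ 2) ^ z.re := by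
  rw [oscillatoryWeight, norm_mul, Complex.norm_exp_ofReal_mul_I, one_mul,
    Complex.norm_cpow_eq_rpow_re_of_pos (by positivity)]

lemma hasDerivAt (u : ℝ) :
    HasDerivAt (oscillatoryWeight z)
      ((-(2 * π * Complex.I) + z * ((2 * u / (1 + u ^ 2) : ℝ) : ℂ)) * oscillatoryWeight z u)
      u := by
  have hw : (0 : ℝ) < 1 + u ^ 2 := by positivity
  have hphase : HasDerivAt (fun u : ℝ => Complex.exp (↑(-(2 * π * u)) * Complex.I))
      (Complex.exp (↑(-(2 * π * u)) * Complex.I) * (↑(-(2 * π * 1)) * Complex.I)) u :=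
    ((((hasDerivAt_id u).const_mul (2 * π)).neg.ofReal_comp).mul_const Complex.I).cexp
  have hbase : HasDerivAt (fun u : ℝ => ((1 + u ^ 2 : ℝ) : ℂ)) ↑(2 * u) u := by
    simpa using (((hasDerivAt_pow 2 u).const_add 1).ofReal_comp)
  have hpow := (Complex.hasStrictDerivAt_cpow_const (c := z)
    (Complex.ofReal_mem_slitPlane.2 hw)).hasDerivAt.comp u hbase
  refine (hphase.mul hpow).congr_deriv ?_
  simp only [oscillatoryWeight, Function.comp_apply]
  rw [Complex.cpow_sub _ _ (Complex.ofReal_ne_zero.2 hw.ne'), Complex.cpow_one]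
  push_cast
  field_simp

lemma differentiable : Differentiable ℝ (oscillatoryWeight z) :=
  fun u => (hasDerivAt z u).differentiableAt

lemma norm_deriv_le (u : ℝ) :
    ‖deriv (oscillatoryWeight z) u‖ ≤ (2 * π + ‖z‖) * (1 + u ^ 2) ^ z.re := by
  rw [(hasDerivAt z u).deriv, norm_mul, norm_eq]
  gcongr
  have hratio : |2 * u / (1 + u ^ 2)| ≤ 1 := by
    rw [abs_div, abs_of_pos (by positivity : (0 : ℝ) < 1 + u ^ 2), div_le_one (by positivity),
      abs_mul, abs_two]
    nlinarith [sq_abs u, sq_nonneg (|u| - 1)]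
  calc ‖-(2 * π * Complex.I) + z * ((2 * u / (1 + u ^ 2) : ℝ) : ℂ)‖
      ≤ 2 * π + ‖z‖ * |2 * u / (1 + u ^ 2)| := by
        refine (norm_add_le _ _).trans ?_
        rw [norm_mul z, Complex.norm_real, Real.norm_eq_abs]
        simp [abs_of_pos pi_pos]
    _ ≤ 2 * π + ‖z‖ := by nlinarith [norm_nonneg z]

lemma norm_deriv_le_inv_one_add_sq (hz : z.re ≤ -1) (u : ℝ) :
    ‖deriv (oscillatoryWeight z) u‖ ≤ (2 * π + ‖z‖) * (1 + u ^ 2)⁻¹ := by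
  refine (norm_deriv_le z u).trans ?_
  rw [← Real.rpow_neg_one]
  gcongr
  nlinarith [sq_nonneg u]

lemma integrable_deriv (hz : z.re ≤ -1) : Integrable (deriv (oscillatoryWeight z)) :=
  (integrable_inv_one_add_sq.const_mul _).mono' (aestronglyMeasurable_deriv _ _)
    (ae_of_all _ (norm_deriv_le_inv_one_add_sq z hz))

lemma integral_norm_deriv_le (hz : z.re ≤ -1) :
    ∫ u, ‖deriv (oscillatoryWeight z) u‖ ≤ (2 * π + ‖z‖) * π :=
  calc ∫ u, ‖deriv (oscillatoryWeight z) u‖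
        ≤ ∫ u : ℝ, (2 * π + ‖z‖) * (1 + u ^ 2)⁻¹ :=
        integral_mono (integrable_deriv z hz).norm (integrable_inv_one_add_sq.const_mul _)
          (norm_deriv_le_inv_one_add_sq z hz)
    _ = (2 * π + ‖z‖) * π := by rw [integral_const_mul, integral_univ_inv_one_add_sq]

lemma integrable_comp (hz : z.re < -1 / 2) {f : ℝ → ℝ} (hf : Measurable f) {c : ℝ}
    (hc : 0 < c) (hcf : ∀ t, c * (1 + t ^ 2) ≤ 1 + f t ^ 2) :
    Integrable fun t => oscillatoryWeight z (f t) := by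
  have hdom : Integrable fun t : ℝ => c ^ z.re * (1 + ‖t‖ ^ 2) ^ (-(-2 * z.re) / 2) :=
    (integrable_rpow_neg_one_add_norm_sq (by simp; linarith)).const_mul _
  refine hdom.mono' ((differentiable z).continuous.measurable.comp hf).aestronglyMeasurable
    (ae_of_all _ fun t => ?_)
  rw [norm_eq, Real.norm_eq_abs, sq_abs, show -(-2 * z.re) / 2 = z.re by ring,
    ← Real.mul_rpow hc.le (by positivity)]
  exact Real.rpow_le_rpow_of_nonpos (by positivity) (hcf t) (by linarith)

end oscillatoryWeight

lemma fourierChar_smul_oscillatoryWeight (z : ℂ) (ξ η y t : ℝ) :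
    𝐞 (-inner ℝ t ξ) • oscillatoryWeight z (η * y) =
      Complex.exp (↑(-(2 * π * (ξ * t + η * y))) * Complex.I) *
        ((1 + η ^ 2 * y ^ 2 : ℝ) : ℂ) ^ z := by
  rw [Circle.smul_def, Real.fourierChar_apply, oscillatoryWeight, smul_eq_mul,
    ← mul_assoc (Complex.exp _), ← Complex.exp_add, mul_pow]
  simp only [RCLike.inner_apply, conj_trivial]
  push_cast
  ring_nf

/-- the bound `|ξ ∂m_z/∂ξ (ξ,η)| ≤ C (1 + |Im z|)` for `Re z < −1`, where
`ξ ∂m_z/∂ξ (ξ,η) = −2πi ξ ∫ e^{−2πi(ξt + ηγ(t))} (1 + η²γ(t)²)^z dt` and the integral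
converges absolutely; `C` depends only on `Re z` (not on `ξ`, `η`, `Im z`, or `γ`). -/
theorem xi_derivative_multiplier_bound :
    ∀ a : ℝ, a < -1 → ∃ C : ℝ, ∀ γ : ℝ → ℝ,
      Continuous γ → (∀ t, γ (-t) = -γ t) →
      ContDiffOn ℝ 2 γ (Set.Ici 0) →
      StrictMonoOn γ (Set.Ici 0) → ConvexOn ℝ (Set.Ici 0) γ →
      (MonotoneOn (deriv (deriv γ)) (Set.Ioi 0) ∨
        AntitoneOn (deriv (deriv γ)) (Set.Ioi 0)) →
      (∃ C₀ > (0:ℝ), ∀ t : ℝ, 0 < t → deriv γ t ≤ C₀ * t * deriv (deriv γ) t) →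
      ∀ z : ℂ, z.re = a → ∀ ξ η : ℝ, η ≠ 0 →
        Integrable (fun t : ℝ =>
          Complex.exp (((-(2 * Real.pi * (ξ * t + η * γ t)) : ℝ) : ℂ) * Complex.I) *
            ((1 + η ^ 2 * γ t ^ 2 : ℝ) : ℂ) ^ z) volume ∧
        ‖2 * Real.pi * (ξ : ℂ) * ∫ t : ℝ,
            Complex.exp (((-(2 * Real.pi * (ξ * t + η * γ t)) : ℝ) : ℂ) * Complex.I) *
              ((1 + η ^ 2 * γ t ^ 2 : ℝ) : ℂ) ^ z‖ ≤ C * (1 + |z.im|) := by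
  intro a ha
  refine ⟨(2 * π + |a| + 1) * π, fun γ hγ hodd hC2 hmono hconv _ _ z hz ξ η hη => ?_⟩
  set g : ℝ → ℂ := oscillatoryWeight z ∘ fun t => η * γ t
  have hγ' := Function.Odd.hasDerivAt_of_hasDerivWithinAt_Ici hodd fun t ht =>
    ((hC2.differentiableOn two_ne_zero) t ht).hasDerivWithinAt
  have hf' : ∀ t, HasDerivAt (fun t => η * γ t) (η * derivWithin γ (Set.Ici 0) |t|) t :=
    fun t => (hγ' t).const_mul η
  have hinj : Function.Injective fun t => η * γ t :=
    (mul_right_injective₀ hη).comp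
      (Function.Odd.strictMono_of_strictMonoOn_Ici hodd hmono).injective
  obtain ⟨c, hc, hcγ⟩ := Function.Odd.exists_mul_one_add_sq_le hodd hmono hconv hη
  have hz1 : z.re ≤ -1 := hz ▸ ha.le
  have hg : Integrable g :=
    oscillatoryWeight.integrable_comp z (by linarith) (hγ.measurable.const_mul η) hc hcγ
  have hdg : Integrable (deriv g) :=
    integrable_deriv_comp (oscillatoryWeight.differentiable z) hf' hinj
      (oscillatoryWeight.integrable_deriv z hz1)
  have hfourier : ∀ t, 𝐞 (-inner ℝ t ξ) • g t = _ := fun t =>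
    fourierChar_smul_oscillatoryWeight z ξ η (γ t) t
  refine ⟨?_, ?_⟩
  · simpa only [hfourier] using (Real.fourierIntegral_convergent_iff ξ).2 hg
  have hnorm_z : ‖z‖ ≤ |a| + |z.im| := hz ▸ Complex.norm_le_abs_re_add_abs_im z
  calc ‖2 * π * (ξ : ℂ) * ∫ t, _‖ = 2 * π * |ξ| * ‖𝓕 g ξ‖ := by
        simp_rw [Real.fourier_eq, hfourier, norm_mul]
        simp [abs_of_pos pi_pos]
    _ ≤ ∫ t, ‖deriv g t‖ :=
        two_pi_mul_abs_mul_norm_fourier_le_integral_norm_deriv hg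
          ((oscillatoryWeight.differentiable z).comp fun t => (hf' t).differentiableAt) hdg ξ
    _ ≤ ∫ u, ‖deriv (oscillatoryWeight z) u‖ :=
        integral_norm_deriv_comp_le (oscillatoryWeight.differentiable z) hf' hinj
          (oscillatoryWeight.integrable_deriv z hz1)
    _ ≤ (2 * π + ‖z‖) * π := oscillatoryWeight.integral_norm_deriv_le z hz1
    _ ≤ (2 * π + |a| + |z.im|) * π := by
        nlinarith [mul_le_mul_of_nonneg_right hnorm_z pi_pos.le]
    _ ≤ (2 * π + |a| + 1) * (1 + |z.im|) * π := by
        gcongr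
        nlinarith [pi_pos, abs_nonneg a, abs_nonneg z.im]
    _ = (2 * π + |a| + 1) * π * (1 + |z.im|) := by ring
end

section
/- For every z ∈ ℂ with Re z < −1, every ξ ∈ ℝ and every η ≠ 0, the two integrals I₁ = ∫_ℝ e^{−2πi(ξt + ηγ(t))} η γ(t) (1 + η²γ(t)²)^z dt/t and I₂ = ∫_ℝ e^{−2πi(ξt + ηγ(t))} η² γ(t)² (1 + η²γ(t)²)^{z−1} dt/t converge absolutely, and |−2πi I₁ + 2z I₂| ≤ C (1 + |Im z|), where C depends only on Re z (not on ξ, η, Im z, or γ). (This quantity is |η ∂m_z/∂η (ξ,η)|, where m_z(ξ,η) = p.v. ∫_ℝ e^{−2πi(ξt + ηγ(t))} (1 + η²γ(t)²)^z dt/t.) -/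
/-!
Both integrands have modulus at most `x (1 + x²)^(Re z) / |t|` with `x = |η γ(t)|` (for `I₂`
because `x² ≤ x (1 + x²)`). As `γ` is odd this bound is even in `t`, and for `t > 0` convexity
together with `γ(0) = 0` gives `γ(t) / t ≤ γ'(t)`, so the bound is dominated by
`|η| γ'(t) (1 + (|η| γ(t))²)^(Re z)`. The substitution `v = |η| γ(t)` bounds the integral of
the latter over `(0, ∞)` by `L = ∫₀^∞ (1 + v²)^(Re z) dv`, which depends only on `Re z`.
Hence `|I₁|, |I₂| ≤ 2L` and `|−2πi I₁ + 2z I₂| ≤ 4 (π + |z|) L`.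
-/

open MeasureTheory Set Real

section ChangeOfVariables

variable {s t : Set ℝ} {g g' ψ : ℝ → ℝ}

theorem integrableOn_abs_deriv_mul_comp (hs : MeasurableSet s)
    (hg' : ∀ x ∈ s, HasDerivWithinAt g (g' x) s x) (hg : InjOn g s) (hst : MapsTo g s t)
    (hψ : IntegrableOn ψ t) : IntegrableOn (fun x => |g' x| * ψ (g x)) s :=
  (integrableOn_image_iff_integrableOn_abs_deriv_smul hs hg' hg ψ).1
    (hψ.mono_set hst.image_subset)

theorem integral_abs_deriv_mul_comp_le (hs : MeasurableSet s)
    (hg' : ∀ x ∈ s, HasDerivWithinAt g (g' x) s x) (hg : InjOn g s) (hst : MapsTo g s t)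
    (ht : MeasurableSet t) (hψ : IntegrableOn ψ t) (hψ₀ : ∀ v ∈ t, 0 ≤ ψ v) :
    ∫ x in s, |g' x| * ψ (g x) ≤ ∫ v in t, ψ v := by
  have hcov := integral_image_eq_integral_abs_deriv_smul hs hg' hg ψ
  simp only [smul_eq_mul] at hcov
  rw [← hcov]
  exact setIntegral_mono_set hψ (ae_restrict_of_forall_mem ht hψ₀) hst.image_subset.eventuallyLE

end ChangeOfVariables

section EvenDomination

variable {E : Type*} [NormedAddCommGroup E] {F : ℝ → E} {D : ℝ → ℝ}

theorem MeasureTheory.IntegrableOn.integrable_comp_abs {f : ℝ → E}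
    (hf : IntegrableOn f (Ioi 0)) : Integrable (fun x => f |x|) := by
  have hIoi : IntegrableOn (fun x => f |x|) (Ioi 0) :=
    hf.congr_fun (fun x hx => by rw [abs_of_pos hx]) measurableSet_Ioi
  have hIio : IntegrableOn (fun x => f |x|) (Iio 0) := by
    have hneg := (Measure.measurePreserving_neg (volume : Measure ℝ)).integrableOn_comp_preimage
      (Homeomorph.neg ℝ).measurableEmbedding (f := fun x => f |x|) (s := Iio 0)
    simp only [Function.comp_def, abs_neg, neg_preimage, neg_Iio, neg_zero] at hneg
    exact hneg.1 hIoi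
  rw [← integrableOn_univ, ← Iio_union_Ici, integrableOn_union,
    integrableOn_Ici_iff_integrableOn_Ioi (b := 0)]
  exact ⟨hIio, hIoi⟩

theorem integrable_of_norm_le_comp_abs (hF : AEStronglyMeasurable F)
    (hD : IntegrableOn D (Ioi 0)) (hFD : ∀ t ≠ 0, ‖F t‖ ≤ D |t|) : Integrable F :=
  hD.integrable_comp_abs.mono' hF <| (Measure.ae_ne volume 0).mono hFD

theorem norm_integral_le_of_norm_le_comp_abs [NormedSpace ℝ E] (hD : IntegrableOn D (Ioi 0))
    (hFD : ∀ t ≠ 0, ‖F t‖ ≤ D |t|) : ‖∫ t, F t‖ ≤ 2 * ∫ s in Ioi 0, D s := by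
  rw [← integral_comp_abs]
  exact norm_integral_le_of_norm_le hD.integrable_comp_abs ((Measure.ae_ne volume 0).mono hFD)

end EvenDomination

theorem ConvexOn.le_mul_of_hasDerivAt {f : ℝ → ℝ} (hf : ConvexOn ℝ (Ici 0) f)
    (h₀ : f 0 = 0) {t f' : ℝ} (ht : 0 < t) (hd : HasDerivAt f f' t) : f t ≤ t * f' := by
  have := hf.slope_le_of_hasDerivAt self_mem_Ici ht.le ht hd
  rw [slope_def_field, h₀, sub_zero, sub_zero, div_le_iff₀ ht] at this
  linarith

theorem Function.Odd.abs_apply_eq_apply_abs {f : ℝ → ℝ} (hodd : f.Odd)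
    (hf : ∀ t, 0 ≤ t → 0 ≤ f t) (t : ℝ) : |f t| = f |t| := by
  rcases le_total 0 t with ht | ht
  · rw [abs_of_nonneg ht, abs_of_nonneg (hf t ht)]
  · rw [abs_of_nonpos ht, ← abs_neg, ← hodd, abs_of_nonneg (hf _ (neg_nonneg.2 ht))]

theorem integrable_one_add_sq_rpow {a : ℝ} (ha : a < -1 / 2) :
    Integrable fun v : ℝ => (1 + v ^ 2) ^ a := by
  have h := integrable_rpow_neg_one_add_norm_sq (E := ℝ) (μ := volume) (r := -2 * a)
    (by rw [Module.finrank_self, Nat.cast_one]; linarith)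
  simpa [Real.norm_eq_abs, sq_abs, neg_div] using h

section OddConvex

variable {γ : ℝ → ℝ}

theorem abs_mul_rpow_div_abs_le_abs_deriv_mul_rpow (hodd : γ.Odd)
    (hmono : MonotoneOn γ (Ici 0)) (hconv : ConvexOn ℝ (Ici 0) γ)
    (hγ' : ∀ t, 0 < t → HasDerivAt γ (deriv γ t) t) (a c : ℝ) {t : ℝ} (ht : t ≠ 0) :
    |c * γ t| * (1 + (c * γ t) ^ 2) ^ a / |t| ≤
      |(|c| * deriv γ |t|)| * (1 + (|c| * γ |t|) ^ 2) ^ a := by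
  have hpos : 0 < |t| := abs_pos.2 ht
  have hγ_abs : |γ t| = γ |t| := hodd.abs_apply_eq_apply_abs
    (fun s hs => hodd.map_zero ▸ hmono self_mem_Ici hs hs) t
  have hslope := hconv.le_mul_of_hasDerivAt hodd.map_zero hpos (hγ' _ hpos)
  rw [abs_mul, hγ_abs, mul_pow, ← sq_abs c, ← sq_abs (γ t), hγ_abs, ← mul_pow,
    div_le_iff₀ hpos]
  calc |c| * γ |t| * (1 + (|c| * γ |t|) ^ 2) ^ a
      ≤ |c| * (|t| * deriv γ |t|) * (1 + (|c| * γ |t|) ^ 2) ^ a := by gcongr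
    _ = |c| * deriv γ |t| * (1 + (|c| * γ |t|) ^ 2) ^ a * |t| := by ring
    _ ≤ |(|c| * deriv γ |t|)| * (1 + (|c| * γ |t|) ^ 2) ^ a * |t| := by
      gcongr
      exact le_abs_self _

theorem integrable_and_norm_integral_le_of_norm_le_abs_mul_rpow_div (hodd : γ.Odd)
    (hmono : StrictMonoOn γ (Ici 0)) (hconv : ConvexOn ℝ (Ici 0) γ)
    (hγ' : ∀ t, 0 < t → HasDerivAt γ (deriv γ t) t) {a c : ℝ} (ha : a < -1) (hc : c ≠ 0)
    {F : ℝ → ℂ} (hF : Measurable F)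
    (hFle : ∀ t ≠ 0, ‖F t‖ ≤ |c * γ t| * (1 + (c * γ t) ^ 2) ^ a / |t|) :
    Integrable F ∧ ‖∫ t, F t‖ ≤ 2 * ∫ v in Ioi 0, (1 + v ^ 2) ^ a := by
  have hFD (t : ℝ) (ht : t ≠ 0) := (hFle t ht).trans
    (abs_mul_rpow_div_abs_le_abs_deriv_mul_rpow hodd hmono.monotoneOn hconv hγ' a c ht)
  have hψ := (integrable_one_add_sq_rpow (a := a) (by linarith)).integrableOn (s := Ioi 0)
  have hg' (x : ℝ) (hx : x ∈ Ioi 0) :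
      HasDerivWithinAt (fun s => |c| * γ s) (|c| * deriv γ x) (Ioi 0) x :=
    ((hγ' x hx).const_mul |c|).hasDerivWithinAt
  have hg : StrictMonoOn (fun s => |c| * γ s) (Ioi 0) := fun x hx y hy hxy =>
    mul_lt_mul_of_pos_left (hmono (Ioi_subset_Ici_self hx) (Ioi_subset_Ici_self hy) hxy)
      (abs_pos.2 hc)
  have hmaps : MapsTo (fun s => |c| * γ s) (Ioi 0) (Ioi 0) := fun x hx =>
    mul_pos (abs_pos.2 hc) (hodd.map_zero ▸ hmono self_mem_Ici (Ioi_subset_Ici_self hx) hx)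
  have hD := integrableOn_abs_deriv_mul_comp measurableSet_Ioi hg' hg.injOn hmaps hψ
  refine ⟨integrable_of_norm_le_comp_abs hF.aestronglyMeasurable hD hFD,
    (norm_integral_le_of_norm_le_comp_abs hD hFD).trans
      (mul_le_mul_of_nonneg_left ?_ zero_le_two)⟩
  exact integral_abs_deriv_mul_comp_le measurableSet_Ioi hg' hg.injOn hmaps measurableSet_Ioi hψ
    fun v _ => by positivity

end OddConvex

theorem norm_cexp_mul_cpow_div (θ x y t : ℝ) (z : ℂ) :
    ‖Complex.exp (θ * Complex.I) * ((x * y : ℝ) : ℂ) *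
        ((1 + x ^ 2 * y ^ 2 : ℝ) : ℂ) ^ z / t‖ =
      |x * y| * (1 + (x * y) ^ 2) ^ z.re / |t| := by
  rw [norm_div, norm_mul, norm_mul, Complex.norm_exp_ofReal_mul_I, one_mul, Complex.norm_real,
    Real.norm_eq_abs, Complex.norm_cpow_eq_rpow_re_of_pos (by positivity), Complex.norm_real,
    Real.norm_eq_abs, mul_pow]

theorem norm_cexp_mul_sq_cpow_sub_one_div_le (θ x y t : ℝ) (z : ℂ) :
    ‖Complex.exp (θ * Complex.I) * ((x ^ 2 * y ^ 2 : ℝ) : ℂ) *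
        ((1 + x ^ 2 * y ^ 2 : ℝ) : ℂ) ^ (z - 1) / t‖ ≤
      |x * y| * (1 + (x * y) ^ 2) ^ z.re / |t| := by
  rw [norm_div, norm_mul, norm_mul, Complex.norm_exp_ofReal_mul_I, one_mul, Complex.norm_real,
    Real.norm_eq_abs, Complex.norm_cpow_eq_rpow_re_of_pos (by positivity), Complex.norm_real,
    Real.norm_eq_abs, Complex.sub_re, Complex.one_re, ← mul_pow, abs_sq,
    Real.rpow_sub_one (by positivity)]
  set u := x * y
  have hu : u ^ 2 ≤ |u| * (1 + u ^ 2) := by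
    nlinarith [sq_abs u, mul_nonneg (abs_nonneg u) (sq_nonneg (|u| - 1))]
  have hA : 0 ≤ (1 + u ^ 2) ^ z.re := by positivity
  gcongr ?_ / _
  rw [mul_div_assoc', div_le_iff₀ (by positivity)]
  nlinarith [mul_le_mul_of_nonneg_right hu hA]

theorem norm_neg_two_pi_I_mul_add_two_mul_le {I₁ I₂ z : ℂ} {L : ℝ}
    (h₁ : ‖I₁‖ ≤ 2 * L) (h₂ : ‖I₂‖ ≤ 2 * L) :
    ‖-(2 * π * Complex.I) * I₁ + 2 * z * I₂‖ ≤ 4 * (π + |z.re| + 1) * L * (1 + |z.im|) := by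
  have hL : 0 ≤ L := by linarith [norm_nonneg I₁]
  have hz : ‖z‖ ≤ |z.re| + |z.im| := Complex.norm_le_abs_re_add_abs_im z
  calc ‖-(2 * π * Complex.I) * I₁ + 2 * z * I₂‖
      ≤ 2 * π * ‖I₁‖ + 2 * ‖z‖ * ‖I₂‖ := by
        refine (norm_add_le _ _).trans_eq ?_
        simp [abs_of_pos pi_pos]
    _ ≤ 2 * π * (2 * L) + 2 * (|z.re| + |z.im|) * (2 * L) := by gcongr
    _ ≤ 4 * (π + |z.re| + 1) * L * (1 + |z.im|) := by
      nlinarith [abs_nonneg z.re, abs_nonneg z.im, pi_pos, mul_nonneg hL (abs_nonneg z.im),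
        mul_nonneg (mul_nonneg hL (abs_nonneg z.im)) (add_nonneg pi_pos.le (abs_nonneg z.re))]

/-- the bound `|η ∂m_z/∂η (ξ,η)| ≤ C (1 + |Im z|)` for `Re z < −1`, where
`η ∂m_z/∂η (ξ,η) = −2πi I₁ + 2z I₂` with
`I₁ = ∫ e^{−2πi(ξt + ηγ(t))} ηγ(t) (1 + η²γ(t)²)^z dt/t` and
`I₂ = ∫ e^{−2πi(ξt + ηγ(t))} η²γ(t)² (1 + η²γ(t)²)^{z−1} dt/t`, both absolutely
convergent; `C` depends only on `Re z` (not on `ξ`, `η`, `Im z`, or `γ`). -/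
theorem eta_derivative_multiplier_bound :
    ∀ a : ℝ, a < -1 → ∃ C : ℝ, ∀ γ : ℝ → ℝ,
      Continuous γ → (∀ t, γ (-t) = -γ t) →
      ContDiffOn ℝ 2 γ (Set.Ici 0) →
      StrictMonoOn γ (Set.Ici 0) → ConvexOn ℝ (Set.Ici 0) γ →
      (MonotoneOn (deriv (deriv γ)) (Set.Ioi 0) ∨
        AntitoneOn (deriv (deriv γ)) (Set.Ioi 0)) →
      (∃ C₀ > (0:ℝ), ∀ t : ℝ, 0 < t → deriv γ t ≤ C₀ * t * deriv (deriv γ) t) →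
      ∀ z : ℂ, z.re = a → ∀ ξ η : ℝ, η ≠ 0 →
        Integrable (fun t : ℝ =>
          Complex.exp (((-(2 * Real.pi * (ξ * t + η * γ t)) : ℝ) : ℂ) * Complex.I) *
            ((η * γ t : ℝ) : ℂ) * ((1 + η ^ 2 * γ t ^ 2 : ℝ) : ℂ) ^ z / (t : ℂ)) volume ∧
        Integrable (fun t : ℝ =>
          Complex.exp (((-(2 * Real.pi * (ξ * t + η * γ t)) : ℝ) : ℂ) * Complex.I) *
            ((η ^ 2 * γ t ^ 2 : ℝ) : ℂ) * ((1 + η ^ 2 * γ t ^ 2 : ℝ) : ℂ) ^ (z - 1) /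
              (t : ℂ)) volume ∧
        ‖(-(2 * Real.pi * Complex.I)) * (∫ t : ℝ,
            Complex.exp (((-(2 * Real.pi * (ξ * t + η * γ t)) : ℝ) : ℂ) * Complex.I) *
              ((η * γ t : ℝ) : ℂ) * ((1 + η ^ 2 * γ t ^ 2 : ℝ) : ℂ) ^ z / (t : ℂ)) +
          2 * z * (∫ t : ℝ,
            Complex.exp (((-(2 * Real.pi * (ξ * t + η * γ t)) : ℝ) : ℂ) * Complex.I) *
              ((η ^ 2 * γ t ^ 2 : ℝ) : ℂ) * ((1 + η ^ 2 * γ t ^ 2 : ℝ) : ℂ) ^ (z - 1) /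
                (t : ℂ))‖ ≤ C * (1 + |z.im|) := by
  intro a ha
  refine ⟨4 * (π + |a| + 1) * ∫ v in Ioi (0 : ℝ), (1 + v ^ 2) ^ a, ?_⟩
  intro γ hγc hodd hC2 hsm hconv _ _ z hz ξ η hη
  subst hz
  have hγ' (t : ℝ) (ht : 0 < t) : HasDerivAt γ (deriv γ t) t :=
    ((hC2.differentiableOn two_ne_zero).differentiableAt (Ici_mem_nhds ht)).hasDerivAt
  have hγm := hγc.measurable
  have bound := @integrable_and_norm_integral_le_of_norm_le_abs_mul_rpow_div γ hodd hsm hconv hγ'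
    z.re η ha hη
  obtain ⟨hint₁, hI₁⟩ := bound (by fun_prop) fun t _ =>
    (norm_cexp_mul_cpow_div (-(2 * π * (ξ * t + η * γ t))) η (γ t) t z).le
  obtain ⟨hint₂, hI₂⟩ := bound (by fun_prop) fun t _ =>
    norm_cexp_mul_sq_cpow_sub_one_div_le (-(2 * π * (ξ * t + η * γ t))) η (γ t) t z
  exact ⟨hint₁, hint₂, norm_neg_two_pi_I_mul_add_two_mul_le hI₁ hI₂⟩
end
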